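/- (Theorem 3.3, part 2: Gâteaux derivative of G.) Let a < b be real numbers and let f, k, g : ℝ → ℝ be continuous on [a,b]. Define G(f) = ∫_a^b (f − g)² dx + ∫_a^b (D_f − D_g)² dx. Then the limit as ε → 0 (ε ≠ 0) of (G(f + εk) − G(f))/ε exists and equals −2 ∫_a^b k(x) · [ (g(x) − f(x)) + (u_g(x) − u_f(x)) ] dx. -/

import Mathlib

open intervalIntegral Filter

/-- `uFun a b f` is `-Δ⁻¹ f`: the solution of `-y'' = f`, `y a = 0`, `y b = 0`,
given by the explicit double-integral formula of the paper. -/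
noncomputable def uFun (a b : ℝ) (f : ℝ → ℝ) (x : ℝ) : ℝ :=
  (∫ η in x..b, ∫ ξ in a..η, f ξ) -
    ((b - x) / (b - a)) * ∫ η in a..b, ∫ ξ in a..η, f ξ

/-- `DFun a b f = (uFun a b f)'`, the derivative of `-Δ⁻¹ f`. -/
noncomputable def DFun (a b : ℝ) (f : ℝ → ℝ) (x : ℝ) : ℝ :=
  -(∫ ξ in a..x, f ξ) + (1 / (b - a)) * ∫ η in a..b, ∫ ξ in a..η, f ξ

section Helpers
variable {a b : ℝ}

private lemma contF {h : ℝ → ℝ} (hh : Continuous h) :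
    Continuous (fun x => ∫ t in a..x, h t) :=
  intervalIntegral.continuous_primitive (fun _ _ => hh.intervalIntegrable _ _) a

private lemma primDeriv {F : ℝ → ℝ} (hF : Continuous F) (x : ℝ) :
    HasDerivAt (fun u => ∫ t in a..u, F t) (F x) x :=
  intervalIntegral.integral_hasDerivAt_right (hF.intervalIntegrable a x)
    (hF.stronglyMeasurableAtFilter _ _) hF.continuousAt

private lemma DFun_cont {h : ℝ → ℝ} (hh : Continuous h) : Continuous (DFun a b h) := by
  unfold DFun
  exact ((contF hh).neg).add continuous_const

private lemma DFun_hasDerivAt {h : ℝ → ℝ} (hh : Continuous h) (x : ℝ) :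
    HasDerivAt (DFun a b h) (-(h x)) x := by
  unfold DFun
  exact ((primDeriv hh x).neg).add_const _

private lemma uFun_hasDerivAt {h : ℝ → ℝ} (hh : Continuous h) (x : ℝ) :
    HasDerivAt (uFun a b h) (DFun a b h x) x := by
  have hF : Continuous (fun u => ∫ t in a..u, h t) := contF hh
  set C : ℝ := ∫ η in a..b, ∫ ξ in a..η, h ξ with hC
  have heq : uFun a b h = fun x =>
      ((C - ∫ η in a..x, ∫ ξ in a..η, h ξ) - ((b - x) / (b - a)) * C) := by
    funext y
    unfold uFun
    rw [← intervalIntegral.integral_interval_sub_left (hF.intervalIntegrable a b)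
      (hF.intervalIntegrable a y)]
  rw [heq]
  have h1 : HasDerivAt (fun y => C - ∫ η in a..y, ∫ ξ in a..η, h ξ)
      (-(∫ ξ in a..x, h ξ)) x := by
    simpa using (primDeriv hF x).const_sub C
  have h2 : HasDerivAt (fun y : ℝ => ((b - y) / (b - a)) * C) ((-1 / (b - a)) * C) x :=
    (((hasDerivAt_id x).const_sub b).div_const (b - a)).mul_const C
  have := h1.sub h2
  exact this.congr_deriv (by simp only [DFun, hC]; ring)

private lemma uFun_cont {h : ℝ → ℝ} (hh : Continuous h) : Continuous (uFun a b h) :=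
  continuous_iff_continuousAt.2 fun x => (uFun_hasDerivAt hh x).continuousAt

private lemma uFun_a (hab : a < b) {h : ℝ → ℝ} : uFun a b h a = 0 := by
  simp [uFun, div_self (sub_ne_zero.2 hab.ne')]

private lemma uFun_b {h : ℝ → ℝ} : uFun a b h b = 0 := by
  simp [uFun]

private lemma ibp (hab : a < b) {p h : ℝ → ℝ} (hp : Continuous p) (hh : Continuous h) :
    ∫ x in a..b, DFun a b p x * DFun a b h x = ∫ x in a..b, p x * uFun a b h x := by
  have hderiv : ∀ x ∈ Set.uIcc a b,
      HasDerivAt (fun y => DFun a b p y * uFun a b h y)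
        (-(p x) * uFun a b h x + DFun a b p x * DFun a b h x) x := fun x _ =>
    (DFun_hasDerivAt hp x).mul (uFun_hasDerivAt hh x)
  have hcont : Continuous fun x => -(p x) * uFun a b h x + DFun a b p x * DFun a b h x :=
    ((hp.neg).mul (uFun_cont hh)).add ((DFun_cont hp).mul (DFun_cont hh))
  have h0 := intervalIntegral.integral_eq_sub_of_hasDerivAt hderiv (hcont.intervalIntegrable a b)
  rw [uFun_a hab, uFun_b, mul_zero, mul_zero, sub_zero] at h0
  have i1 : IntervalIntegrable (fun x => -(p x) * uFun a b h x) MeasureTheory.volume a b :=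
    ((hp.neg).mul (uFun_cont hh)).intervalIntegrable a b
  have i2 : IntervalIntegrable (fun x => DFun a b p x * DFun a b h x) MeasureTheory.volume a b :=
    ((DFun_cont hp).mul (DFun_cont hh)).intervalIntegrable a b
  rw [intervalIntegral.integral_add i1 i2] at h0
  have : ∫ x in a..b, -(p x) * uFun a b h x = -∫ x in a..b, p x * uFun a b h x := by
    rw [← intervalIntegral.integral_neg]
    congr 1; funext x; ring
  rw [this] at h0
  linarith

private lemma inner_lin {p q : ℝ → ℝ} (hp : Continuous p) (hq : Continuous q) (c : ℝ)
    (u v : ℝ) : ∫ ξ in u..v, (p ξ + c * q ξ) = (∫ ξ in u..v, p ξ) + c * ∫ ξ in u..v, q ξ := by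
  have i1 : IntervalIntegrable p MeasureTheory.volume u v := hp.intervalIntegrable u v
  have i2 : IntervalIntegrable (fun x => c * q x) MeasureTheory.volume u v :=
    (continuous_const.mul hq).intervalIntegrable u v
  rw [intervalIntegral.integral_add i1 i2, intervalIntegral.integral_const_mul]

private lemma double_lin {p q : ℝ → ℝ} (hp : Continuous p) (hq : Continuous q) (c : ℝ) :
    (∫ η in a..b, ∫ ξ in a..η, (p ξ + c * q ξ)) =
      (∫ η in a..b, ∫ ξ in a..η, p ξ) + c * ∫ η in a..b, ∫ ξ in a..η, q ξ := by
  have : (fun η => ∫ ξ in a..η, (p ξ + c * q ξ)) =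
      fun η => (∫ ξ in a..η, p ξ) + c * ∫ ξ in a..η, q ξ := funext fun η => inner_lin hp hq c a η
  rw [this]
  have i1 : IntervalIntegrable (fun η => ∫ ξ in a..η, p ξ) MeasureTheory.volume a b :=
    (contF hp).intervalIntegrable a b
  have i2 : IntervalIntegrable (fun η => c * ∫ ξ in a..η, q ξ) MeasureTheory.volume a b :=
    (continuous_const.mul (contF hq)).intervalIntegrable a b
  rw [intervalIntegral.integral_add i1 i2, intervalIntegral.integral_const_mul]

private lemma DFun_lin {p q : ℝ → ℝ} (hp : Continuous p) (hq : Continuous q) (c x : ℝ) :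
    DFun a b (fun t => p t + c * q t) x = DFun a b p x + c * DFun a b q x := by
  unfold DFun
  rw [inner_lin hp hq c a x, double_lin hp hq c]
  ring

private lemma uFun_lin {p q : ℝ → ℝ} (hp : Continuous p) (hq : Continuous q) (c x : ℝ) :
    uFun a b (fun t => p t + c * q t) x = uFun a b p x + c * uFun a b q x := by
  unfold uFun
  have : (fun η => ∫ ξ in a..η, (p ξ + c * q ξ)) =
      fun η => (∫ ξ in a..η, p ξ) + c * ∫ ξ in a..η, q ξ := funext fun η => inner_lin hp hq c a η
  rw [this]
  have hsplit : ∀ u v : ℝ, (∫ η in u..v, ((∫ ξ in a..η, p ξ) + c * ∫ ξ in a..η, q ξ)) =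
      (∫ η in u..v, ∫ ξ in a..η, p ξ) + c * ∫ η in u..v, ∫ ξ in a..η, q ξ := by
    intro u v
    have i1 : IntervalIntegrable (fun η => ∫ ξ in a..η, p ξ) MeasureTheory.volume u v :=
      (contF hp).intervalIntegrable u v
    have i2 : IntervalIntegrable (fun η => c * ∫ ξ in a..η, q ξ) MeasureTheory.volume u v :=
      (continuous_const.mul (contF hq)).intervalIntegrable u v
    rw [intervalIntegral.integral_add i1 i2, intervalIntegral.integral_const_mul]
  rw [hsplit, hsplit]
  ring

private lemma expand {p q : ℝ → ℝ} (hp : Continuous p) (hq : Continuous q) (ε : ℝ) :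
    (∫ x in a..b, (p x + ε * q x) ^ 2) =
      (∫ x in a..b, (p x) ^ 2) + ((2 * ε) * ∫ x in a..b, q x * p x)
        + ε ^ 2 * ∫ x in a..b, (q x) ^ 2 := by
  have e : (fun x => (p x + ε * q x) ^ 2) =
      fun x => (p x) ^ 2 + ((2 * ε) * (q x * p x) + ε ^ 2 * (q x) ^ 2) :=
    funext fun x => by ring
  rw [e]
  have i1 : IntervalIntegrable (fun x => (p x) ^ 2) MeasureTheory.volume a b :=
    (hp.pow 2).intervalIntegrable a b
  have i2 : IntervalIntegrable
      (fun x => (2 * ε) * (q x * p x) + ε ^ 2 * (q x) ^ 2) MeasureTheory.volume a b :=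
    ((continuous_const.mul (hq.mul hp)).add
      (continuous_const.mul (hq.pow 2))).intervalIntegrable a b
  have i3 : IntervalIntegrable (fun x => (2 * ε) * (q x * p x)) MeasureTheory.volume a b :=
    (continuous_const.mul (hq.mul hp)).intervalIntegrable a b
  have i4 : IntervalIntegrable (fun x => ε ^ 2 * (q x) ^ 2) MeasureTheory.volume a b :=
    (continuous_const.mul (hq.pow 2)).intervalIntegrable a b
  rw [intervalIntegral.integral_add i1 i2, intervalIntegral.integral_add i3 i4,
    intervalIntegral.integral_const_mul, intervalIntegral.integral_const_mul]
  ring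

private lemma key (hab : a < b) {f k g : ℝ → ℝ}
    (hf : Continuous f) (hk : Continuous k) (hg : Continuous g) :
    Tendsto (fun ε : ℝ =>
      (((∫ x in a..b, (f x + ε * k x - g x) ^ 2) +
        ∫ x in a..b, (DFun a b (fun t => f t + ε * k t) x - DFun a b g x) ^ 2) -
       ((∫ x in a..b, (f x - g x) ^ 2) +
        ∫ x in a..b, (DFun a b f x - DFun a b g x) ^ 2)) / ε)
      (nhdsWithin 0 {0}ᶜ)
      (nhds (-2 * ∫ x in a..b,
        k x * ((g x - f x) + (uFun a b g x - uFun a b f x)))) := by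
  set A := ∫ x in a..b, k x * (f x - g x) with hA
  set B := ∫ x in a..b, (k x) ^ 2 with hB
  set C := ∫ x in a..b, DFun a b k x * (DFun a b f x - DFun a b g x) with hC
  set Dq := ∫ x in a..b, (DFun a b k x) ^ 2 with hDq
  have h1 : ∀ ε : ℝ, (∫ x in a..b, (f x + ε * k x - g x) ^ 2) =
      (∫ x in a..b, (f x - g x) ^ 2) + (2 * ε) * A + ε ^ 2 * B := by
    intro ε
    have e : (∫ x in a..b, (f x + ε * k x - g x) ^ 2)
        = ∫ x in a..b, ((f x - g x) + ε * k x) ^ 2 := by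
      congr 1; funext x; ring
    rw [e]; exact expand (hf.sub hg) hk ε
  have h2 : ∀ ε : ℝ, (∫ x in a..b, (DFun a b (fun t => f t + ε * k t) x - DFun a b g x) ^ 2) =
      (∫ x in a..b, (DFun a b f x - DFun a b g x) ^ 2) + (2 * ε) * C + ε ^ 2 * Dq := by
    intro ε
    have e : (∫ x in a..b, (DFun a b (fun t => f t + ε * k t) x - DFun a b g x) ^ 2)
        = ∫ x in a..b, ((DFun a b f x - DFun a b g x) + ε * DFun a b k x) ^ 2 := by
      congr 1; funext x; rw [DFun_lin hf hk]; ring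
    rw [e]; exact expand ((DFun_cont hf).sub (DFun_cont hg)) (DFun_cont hk) ε
  have hval : (-2 * ∫ x in a..b,
      k x * ((g x - f x) + (uFun a b g x - uFun a b f x))) = 2 * (A + C) := by
    have hCval : C = ∫ x in a..b, k x * (uFun a b f x - uFun a b g x) := by
      have e1 : C = ∫ x in a..b, DFun a b k x * DFun a b (fun t => f t + (-1) * g t) x := by
        rw [hC]; congr 1; funext x; rw [DFun_lin hf hg]; ring
      rw [e1, ibp (h := fun t => f t + (-1) * g t) hab hk (hf.add (continuous_const.mul hg))]
      congr 1; funext x; rw [uFun_lin hf hg]; ring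
    have hsplit : (∫ x in a..b, k x * ((g x - f x) + (uFun a b g x - uFun a b f x)))
        = -A + -(∫ x in a..b, k x * (uFun a b f x - uFun a b g x)) := by
      have e : (fun x => k x * ((g x - f x) + (uFun a b g x - uFun a b f x)))
          = fun x => -(k x * (f x - g x)) + -(k x * (uFun a b f x - uFun a b g x)) :=
        funext fun x => by ring
      rw [e]
      have i1 : IntervalIntegrable (fun x => -(k x * (f x - g x))) MeasureTheory.volume a b :=
        ((hk.mul (hf.sub hg)).neg).intervalIntegrable a b
      have i2 : IntervalIntegrable (fun x => -(k x * (uFun a b f x - uFun a b g x)))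
          MeasureTheory.volume a b :=
        ((hk.mul ((uFun_cont hf).sub (uFun_cont hg))).neg).intervalIntegrable a b
      rw [intervalIntegral.integral_add i1 i2, intervalIntegral.integral_neg,
        intervalIntegral.integral_neg]
    rw [hsplit, hCval]; ring
  rw [hval]
  have hlim : Tendsto (fun ε : ℝ => 2 * (A + C) + ε * (B + Dq)) (nhds 0)
      (nhds (2 * (A + C))) := by
    have hc : Continuous (fun ε : ℝ => 2 * (A + C) + ε * (B + Dq)) := by fun_prop
    simpa using hc.tendsto 0
  refine Tendsto.congr' ?_ (hlim.mono_left nhdsWithin_le_nhds)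
  filter_upwards [self_mem_nhdsWithin] with ε hε
  have hε' : ε ≠ 0 := hε
  rw [h1 ε, h2 ε]
  field_simp
  ring

private lemma int_congr (hab : a ≤ b) {f fc : ℝ → ℝ} (hfc : Set.EqOn f fc (Set.Icc a b))
    {c d : ℝ} (hc : c ∈ Set.Icc a b) (hd : d ∈ Set.Icc a b) :
    ∫ ξ in c..d, f ξ = ∫ ξ in c..d, fc ξ :=
  intervalIntegral.integral_congr fun x hx => hfc (Set.uIcc_subset_Icc hc hd hx)

private lemma double_congr (hab : a ≤ b) {f fc : ℝ → ℝ} (hfc : Set.EqOn f fc (Set.Icc a b)) :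
    (∫ η in a..b, ∫ ξ in a..η, f ξ) = ∫ η in a..b, ∫ ξ in a..η, fc ξ :=
  intervalIntegral.integral_congr fun η hη =>
    int_congr hab hfc (Set.left_mem_Icc.2 hab) (Set.uIcc_of_le hab ▸ hη)

private lemma DFun_congr (hab : a ≤ b) {f fc : ℝ → ℝ} (hfc : Set.EqOn f fc (Set.Icc a b))
    {x : ℝ} (hx : x ∈ Set.Icc a b) : DFun a b f x = DFun a b fc x := by
  unfold DFun
  rw [int_congr hab hfc (Set.left_mem_Icc.2 hab) hx, double_congr hab hfc]

private lemma uFun_congr (hab : a ≤ b) {f fc : ℝ → ℝ} (hfc : Set.EqOn f fc (Set.Icc a b))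
    {x : ℝ} (hx : x ∈ Set.Icc a b) : uFun a b f x = uFun a b fc x := by
  unfold uFun
  have hFeq : Set.EqOn (fun η => ∫ ξ in a..η, f ξ) (fun η => ∫ ξ in a..η, fc ξ)
      (Set.Icc a b) := fun η hη => int_congr hab hfc (Set.left_mem_Icc.2 hab) hη
  rw [int_congr hab hFeq hx (Set.right_mem_Icc.2 hab), double_congr hab hfc]

end Helpers

theorem stmt_13 (a b : ℝ) (hab : a < b) (f k g : ℝ → ℝ)
    (hf : ContinuousOn f (Set.Icc a b)) (hk : ContinuousOn k (Set.Icc a b))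
    (hg : ContinuousOn g (Set.Icc a b))
    (G : (ℝ → ℝ) → ℝ)
    (hG : ∀ f : ℝ → ℝ, G f = (∫ x in a..b, (f x - g x) ^ 2) +
      ∫ x in a..b, (DFun a b f x - DFun a b g x) ^ 2) :
    Tendsto (fun ε : ℝ => (G (fun t => f t + ε * k t) - G f) / ε)
      (nhdsWithin 0 {0}ᶜ)
      (nhds (-2 * ∫ x in a..b,
        k x * ((g x - f x) + (uFun a b g x - uFun a b f x)))) := by
  have hab' : a ≤ b := hab.le
  set cl : ℝ → ℝ := fun x => max a (min x b) with hcl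
  have hclc : Continuous cl := continuous_const.max (continuous_id.min continuous_const)
  have hclmem : ∀ x, cl x ∈ Set.Icc a b := fun x =>
    ⟨le_max_left _ _, max_le hab' (min_le_right x b)⟩
  have hclid : ∀ x ∈ Set.Icc a b, cl x = x := fun x hx => by
    simp [hcl, min_eq_left hx.2, max_eq_right hx.1]
  set fc := f ∘ cl with hfcdef
  set kc := k ∘ cl with hkcdef
  set gc := g ∘ cl with hgcdef
  have hfc : Continuous fc := hf.comp_continuous hclc hclmem
  have hkc : Continuous kc := hk.comp_continuous hclc hclmem
  have hgc : Continuous gc := hg.comp_continuous hclc hclmem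
  have hfeq : Set.EqOn f fc (Set.Icc a b) := fun x hx => by
    simp [hfcdef, Function.comp, hclid x hx]
  have hkeq : Set.EqOn k kc (Set.Icc a b) := fun x hx => by
    simp [hkcdef, Function.comp, hclid x hx]
  have hgeq : Set.EqOn g gc (Set.Icc a b) := fun x hx => by
    simp [hgcdef, Function.comp, hclid x hx]
  -- replace the target value
  have htarget : (∫ x in a..b, k x * ((g x - f x) + (uFun a b g x - uFun a b f x)))
      = ∫ x in a..b, kc x * ((gc x - fc x) + (uFun a b gc x - uFun a b fc x)) := by
    refine intervalIntegral.integral_congr fun x hx => ?_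
    have hx' : x ∈ Set.Icc a b := Set.uIcc_of_le hab' ▸ hx
    rw [hkeq hx', hgeq hx', hfeq hx', uFun_congr hab' hgeq hx', uFun_congr hab' hfeq hx']
  -- replace the function
  have hfun : (fun ε : ℝ => (G (fun t => f t + ε * k t) - G f) / ε) =
      fun ε : ℝ =>
      (((∫ x in a..b, (fc x + ε * kc x - gc x) ^ 2) +
        ∫ x in a..b, (DFun a b (fun t => fc t + ε * kc t) x - DFun a b gc x) ^ 2) -
       ((∫ x in a..b, (fc x - gc x) ^ 2) +
        ∫ x in a..b, (DFun a b fc x - DFun a b gc x) ^ 2)) / ε := by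
    funext ε
    have hsum : Set.EqOn (fun t => f t + ε * k t) (fun t => fc t + ε * kc t)
        (Set.Icc a b) := fun x hx => by simp only []; rw [hfeq hx, hkeq hx]
    have e1 : (∫ x in a..b, (f x + ε * k x - g x) ^ 2)
        = ∫ x in a..b, (fc x + ε * kc x - gc x) ^ 2 := by
      refine intervalIntegral.integral_congr fun x hx => ?_
      have hx' : x ∈ Set.Icc a b := Set.uIcc_of_le hab' ▸ hx
      rw [hfeq hx', hkeq hx', hgeq hx']
    have e2 : (∫ x in a..b, (DFun a b (fun t => f t + ε * k t) x - DFun a b g x) ^ 2)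
        = ∫ x in a..b, (DFun a b (fun t => fc t + ε * kc t) x - DFun a b gc x) ^ 2 := by
      refine intervalIntegral.integral_congr fun x hx => ?_
      have hx' : x ∈ Set.Icc a b := Set.uIcc_of_le hab' ▸ hx
      rw [DFun_congr hab' hsum hx', DFun_congr hab' hgeq hx']
    have e3 : (∫ x in a..b, (f x - g x) ^ 2) = ∫ x in a..b, (fc x - gc x) ^ 2 := by
      refine intervalIntegral.integral_congr fun x hx => ?_
      have hx' : x ∈ Set.Icc a b := Set.uIcc_of_le hab' ▸ hx
      rw [hfeq hx', hgeq hx']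
    have e4 : (∫ x in a..b, (DFun a b f x - DFun a b g x) ^ 2)
        = ∫ x in a..b, (DFun a b fc x - DFun a b gc x) ^ 2 := by
      refine intervalIntegral.integral_congr fun x hx => ?_
      have hx' : x ∈ Set.Icc a b := Set.uIcc_of_le hab' ▸ hx
      rw [DFun_congr hab' hfeq hx', DFun_congr hab' hgeq hx']
    rw [hG, hG, e1, e2, e3, e4]
  rw [hfun, htarget]
  exact key hab hfc hkc hgc
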